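/- arXiv:1912.01392 — 2 statements merged into one kernel-verified Lean document; each statement's English description precedes it below -/
import Mathlib

section
/- Let (A, Δ, Δ') be a Hopf brace with antipode S for Δ, and endow A with the left (A, Δ')-comodule coalgebra structure ρ(a) = a_{(-1)} ⊗ a_{(0)} = S(a_1) a_{21'} ⊗ a_{22'}. Then the identity map π = id_A, viewed as a map from the Hopf algebra (A, Δ) to the Hopf algebra (A, Δ'), is a bijective 1-cocycle: it is an algebra isomorphism and satisfies π(a)_{1'} ⊗ π(a)_{2'} = π(a_1) a_{2(-1)} ⊗ π(a_{2(0)}) for all a ∈ A. -/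
open TensorProduct

noncomputable section

namespace HopfPaper

set_option synthInstance.maxHeartbeats 1000000

/-- A Hopf algebra structure (comultiplication `Δ`, counit `ε`, antipode `S`) on a
given `k`-algebra `H`, expressed in terms of `k`-linear maps.  Together with the
algebra structure of `H` this is exactly the data of a Hopf algebra
`(H, m, 1, Δ, ε, S)` over the field `k`. -/
structure HopfStruct (k : Type*) [Field k] (H : Type*) [Ring H] [Algebra k H] where
  /-- the comultiplication -/
  Δ : H →ₗ[k] H ⊗[k] H
  /-- the counit -/
  ε : H →ₗ[k] k
  /-- the antipode -/
  S : H →ₗ[k] H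
  coassoc : ∀ h : H,
    TensorProduct.map (LinearMap.id : H →ₗ[k] H) Δ (Δ h)
      = TensorProduct.assoc k H H H
          (TensorProduct.map Δ (LinearMap.id : H →ₗ[k] H) (Δ h))
  counit_left : ∀ h : H,
    TensorProduct.lid k H (TensorProduct.map ε (LinearMap.id : H →ₗ[k] H) (Δ h)) = h
  counit_right : ∀ h : H,
    TensorProduct.rid k H (TensorProduct.map (LinearMap.id : H →ₗ[k] H) ε (Δ h)) = h
  comul_mul : ∀ a b : H, Δ (a * b) = Δ a * Δ b
  comul_one : Δ 1 = 1
  counit_mul : ∀ a b : H, ε (a * b) = ε a * ε b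
  counit_one : ε 1 = 1
  antipode_left : ∀ h : H,
    LinearMap.mul' k H (TensorProduct.map S (LinearMap.id : H →ₗ[k] H) (Δ h))
      = algebraMap k H (ε h)
  antipode_right : ∀ h : H,
    LinearMap.mul' k H (TensorProduct.map (LinearMap.id : H →ₗ[k] H) S (Δ h))
      = algebraMap k H (ε h)

variable (k : Type*) [Field k]

/-- `m ↦ m ⊗ 1`. -/
def ι₁ (M N : Type*) [Ring M] [Algebra k M] [Ring N] [Algebra k N] :
    M →ₗ[k] M ⊗[k] N :=
  (TensorProduct.mk k M N).flip 1

/-- `n ↦ 1 ⊗ n`. -/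
def ι₂ (M N : Type*) [Ring M] [Algebra k M] [Ring N] [Algebra k N] :
    N →ₗ[k] M ⊗[k] N :=
  TensorProduct.mk k M N 1

/-- multiplication of three factors, `x ⊗ (y ⊗ z) ↦ x * y * z`. -/
def mul₃ (T : Type*) [Ring T] [Algebra k T] : T ⊗[k] (T ⊗[k] T) →ₗ[k] T :=
  (LinearMap.mul' k T).comp
    (TensorProduct.map (LinearMap.id : T →ₗ[k] T) (LinearMap.mul' k T))

/-- multiplication of four factors. -/
def mul₄ (T : Type*) [Ring T] [Algebra k T] :
    T ⊗[k] (T ⊗[k] (T ⊗[k] T)) →ₗ[k] T :=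
  (LinearMap.mul' k T).comp
    (TensorProduct.map (LinearMap.id : T →ₗ[k] T) (mul₃ k T))

/-- The left hand side `h_{1'} ⊗ h_{2'1} ⊗ h_{2'2}` of the Hopf brace compatibility
condition (2.1), i.e. `(id ⊗ Δ) ∘ Δ'`. -/
def braceLHS (H : Type*) [Ring H] [Algebra k H] (Δ Δ' : H →ₗ[k] H ⊗[k] H) :
    H →ₗ[k] H ⊗[k] (H ⊗[k] H) :=
  (TensorProduct.map (LinearMap.id : H →ₗ[k] H) Δ).comp Δ'

/-- The right hand side `h_{11'}S(h_2)h_{31'} ⊗ h_{12'} ⊗ h_{32'}` of the Hopf brace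
compatibility condition (2.1):  it is obtained from the twofold comultiplication
`h ↦ h_1 ⊗ (h_2 ⊗ h_3)` (using `Δ`) by applying `Δ'` to the first and third legs,
`S` to the middle leg, placing the results in the appropriate tensor positions of
`H ⊗ (H ⊗ H)` (filled with `1`s) and multiplying. -/
def braceRHS (H : Type*) [Ring H] [Algebra k H] (Δ Δ' : H →ₗ[k] H ⊗[k] H)
    (S : H →ₗ[k] H) : H →ₗ[k] H ⊗[k] (H ⊗[k] H) :=
  (mul₃ k (H ⊗[k] (H ⊗[k] H))).comp
    ((TensorProduct.map
        ((TensorProduct.map (LinearMap.id : H →ₗ[k] H) (ι₁ k H H)).comp Δ')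
        (TensorProduct.map ((ι₁ k H (H ⊗[k] H)).comp S)
          ((TensorProduct.map (LinearMap.id : H →ₗ[k] H) (ι₂ k H H)).comp Δ'))).comp
      ((TensorProduct.map (LinearMap.id : H →ₗ[k] H) Δ).comp Δ))

/-- A Hopf brace on the `k`-algebra `H` : two Hopf algebra structures sharing the
multiplication and unit of `H`, subject to the compatibility condition (2.1):
`h_{1'} ⊗ h_{2'1} ⊗ h_{2'2} = h_{11'}S(h_2)h_{31'} ⊗ h_{12'} ⊗ h_{32'}`. -/
structure HopfBrace (H : Type*) [Ring H] [Algebra k H] where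
  fst : HopfStruct k H
  snd : HopfStruct k H
  compat : ∀ h : H,
    braceLHS k H fst.Δ snd.Δ h = braceRHS k H fst.Δ snd.Δ fst.S h

/-- The coaction `ρ(h) = S(h_1) h_{21'} ⊗ h_{22'}` of Lemma 2.5. -/
def ρmap (H : Type*) [Ring H] [Algebra k H] (Δ Δ' : H →ₗ[k] H ⊗[k] H)
    (S : H →ₗ[k] H) : H →ₗ[k] H ⊗[k] H :=
  (LinearMap.mul' k (H ⊗[k] H)).comp
    ((TensorProduct.map ((ι₁ k H H).comp S) Δ').comp Δ)

/-- The coaction `φ(a) = (T(a_{1'}))_{(-1)} a_{2'} ⊗ (T(a_{1'}))_{(0)} a_{3'}`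
of Lemma 2.8(2), where `x_{(-1)} ⊗ x_{(0)} = ρ(x)`. -/
def φmap (H : Type*) [Ring H] [Algebra k H] (Δ Δ' : H →ₗ[k] H ⊗[k] H)
    (S T : H →ₗ[k] H) : H →ₗ[k] H ⊗[k] H :=
  (LinearMap.mul' k (H ⊗[k] H)).comp
    ((TensorProduct.map ((ρmap k H Δ Δ' S).comp T)
        (LinearMap.id : H ⊗[k] H →ₗ[k] H ⊗[k] H)).comp
      ((TensorProduct.map (LinearMap.id : H →ₗ[k] H) Δ').comp Δ'))

/-- `ρ : A →ₗ H ⊗ A` is a coassociative counital left coaction of the coalgebra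
`(H, ΔH, εH)`. -/
def LeftCoaction (A H : Type*) [Ring A] [Algebra k A] [Ring H] [Algebra k H]
    (ΔH : H →ₗ[k] H ⊗[k] H) (εH : H →ₗ[k] k) (ρ : A →ₗ[k] H ⊗[k] A) : Prop :=
  (∀ a : A,
    TensorProduct.map (LinearMap.id : H →ₗ[k] H) ρ (ρ a)
      = TensorProduct.assoc k H H A
          (TensorProduct.map ΔH (LinearMap.id : A →ₗ[k] A) (ρ a))) ∧
  (∀ a : A,
    TensorProduct.lid k A (TensorProduct.map εH (LinearMap.id : A →ₗ[k] A) (ρ a)) = a)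

/-- `φ : H →ₗ H ⊗ A` is a coassociative counital right coaction of the coalgebra
`(A, ΔA, εA)`. -/
def RightCoaction (A H : Type*) [Ring A] [Algebra k A] [Ring H] [Algebra k H]
    (ΔA : A →ₗ[k] A ⊗[k] A) (εA : A →ₗ[k] k) (φ : H →ₗ[k] H ⊗[k] A) : Prop :=
  (∀ h : H,
    TensorProduct.map (LinearMap.id : H →ₗ[k] H) ΔA (φ h)
      = TensorProduct.assoc k H A A
          (TensorProduct.map φ (LinearMap.id : A →ₗ[k] A) (φ h))) ∧
  (∀ h : H,
    TensorProduct.rid k H (TensorProduct.map (LinearMap.id : H →ₗ[k] H) εA (φ h)) = h)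

/-- a linear map which is moreover multiplicative and unital. -/
def IsAlgebraMorphism (M N : Type*) [Ring M] [Algebra k M] [Ring N] [Algebra k N]
    (f : M →ₗ[k] N) : Prop :=
  (∀ a b : M, f (a * b) = f a * f b) ∧ f 1 = 1

/-- `a ↦ a_{1(-1)} a_{2(-1)} ⊗ a_{1(0)} ⊗ a_{2(0)}`, the right hand side of the
comodule coalgebra condition. -/
def comodCoalgRHS (A H : Type*) [Ring A] [Algebra k A] [Ring H] [Algebra k H]
    (ΔA : A →ₗ[k] A ⊗[k] A) (ρ : A →ₗ[k] H ⊗[k] A) :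
    A →ₗ[k] H ⊗[k] (A ⊗[k] A) :=
  (LinearMap.mul' k (H ⊗[k] (A ⊗[k] A))).comp
    ((TensorProduct.map
        ((TensorProduct.map (LinearMap.id : H →ₗ[k] H) (ι₁ k A A)).comp ρ)
        ((TensorProduct.map (LinearMap.id : H →ₗ[k] H) (ι₂ k A A)).comp ρ)).comp ΔA)

/-- The two conditions making a left `H`-comodule `(A, ρ)` a comodule coalgebra:
`a_{(-1)} ⊗ Δ(a_{(0)}) = a_{1(-1)} a_{2(-1)} ⊗ a_{1(0)} ⊗ a_{2(0)}` and
`a_{(-1)} ε(a_{(0)}) = ε(a) 1`. -/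
def IsComodCoalg (A H : Type*) [Ring A] [Algebra k A] [Ring H] [Algebra k H]
    (ΔA : A →ₗ[k] A ⊗[k] A) (εA : A →ₗ[k] k) (ρ : A →ₗ[k] H ⊗[k] A) : Prop :=
  (∀ a : A,
    TensorProduct.map (LinearMap.id : H →ₗ[k] H) ΔA (ρ a)
      = comodCoalgRHS k A H ΔA ρ a) ∧
  (∀ a : A,
    TensorProduct.rid k H (TensorProduct.map (LinearMap.id : H →ₗ[k] H) εA (ρ a))
      = algebraMap k H (εA a))

/-- `a ↦ a_{1(-1)} a_{2(-1)[0]} ⊗ a_{1(0)} a_{2(-1)[1]} ⊗ a_{2(0)}`, the right hand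
side of (HM2). -/
def HM2RHS (A H : Type*) [Ring A] [Algebra k A] [Ring H] [Algebra k H]
    (ΔA : A →ₗ[k] A ⊗[k] A) (ρ : A →ₗ[k] H ⊗[k] A) (φ : H →ₗ[k] H ⊗[k] A) :
    A →ₗ[k] H ⊗[k] (A ⊗[k] A) :=
  (LinearMap.mul' k (H ⊗[k] (A ⊗[k] A))).comp
    ((TensorProduct.map
        ((TensorProduct.map (LinearMap.id : H →ₗ[k] H) (ι₁ k A A)).comp ρ)
        ((TensorProduct.assoc k H A A).toLinearMap.comp
          ((TensorProduct.map φ (LinearMap.id : A →ₗ[k] A)).comp ρ))).comp ΔA)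

/-- `h ↦ h_{1[0]} ⊗ h_{1[1](-1)} h_{2[0]} ⊗ h_{1[1](0)} h_{2[1]}`, the right hand
side of (HM3). -/
def HM3RHS (A H : Type*) [Ring A] [Algebra k A] [Ring H] [Algebra k H]
    (ΔH : H →ₗ[k] H ⊗[k] H) (ρ : A →ₗ[k] H ⊗[k] A) (φ : H →ₗ[k] H ⊗[k] A) :
    H →ₗ[k] H ⊗[k] (H ⊗[k] A) :=
  (LinearMap.mul' k (H ⊗[k] (H ⊗[k] A))).comp
    ((TensorProduct.map
        ((TensorProduct.map (LinearMap.id : H →ₗ[k] H) ρ).comp φ)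
        ((ι₂ k H (H ⊗[k] A)).comp φ)).comp ΔH)

/-- A Hopf matched pair `(A, H)` (Definition 3.1): `ρ` makes `A` a left
`H`-comodule algebra, `φ` makes `H` a right `A`-comodule algebra, and the
compatibility conditions (HM1)–(HM4) hold. -/
def IsHopfMatchedPair (A H : Type*) [Ring A] [Algebra k A] [Ring H] [Algebra k H]
    (ΔA : A →ₗ[k] A ⊗[k] A) (εA : A →ₗ[k] k)
    (ΔH : H →ₗ[k] H ⊗[k] H) (εH : H →ₗ[k] k)
    (ρ : A →ₗ[k] H ⊗[k] A) (φ : H →ₗ[k] H ⊗[k] A) : Prop :=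
  LeftCoaction k A H ΔH εH ρ ∧
  IsAlgebraMorphism k A (H ⊗[k] A) ρ ∧
  RightCoaction k A H ΔA εA φ ∧
  IsAlgebraMorphism k H (H ⊗[k] A) φ ∧
  -- (HM1)
  (∀ a : A,
    TensorProduct.rid k H (TensorProduct.map (LinearMap.id : H →ₗ[k] H) εA (ρ a))
      = algebraMap k H (εA a)) ∧
  (∀ h : H,
    TensorProduct.lid k A (TensorProduct.map εH (LinearMap.id : A →ₗ[k] A) (φ h))
      = algebraMap k A (εH h)) ∧
  -- (HM2)
  (∀ a : A,
    TensorProduct.map (LinearMap.id : H →ₗ[k] H) ΔA (ρ a) = HM2RHS k A H ΔA ρ φ a) ∧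
  -- (HM3)
  (∀ h : H,
    TensorProduct.assoc k H H A
        (TensorProduct.map ΔH (LinearMap.id : A →ₗ[k] A) (φ h))
      = HM3RHS k A H ΔH ρ φ h) ∧
  -- (HM4)
  (∀ (a : A) (h : H), φ h * ρ a = ρ a * φ h)

/-- Equation (3.2): `Δ(a) = a_{1'} T(a_{2'(-1)}) ⊗ a_{2'(0)}`. -/
def Δfromρ (A : Type*) [Ring A] [Algebra k A] (Δ' : A →ₗ[k] A ⊗[k] A)
    (T : A →ₗ[k] A) (ρ : A →ₗ[k] A ⊗[k] A) : A →ₗ[k] A ⊗[k] A :=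
  (LinearMap.mul' k (A ⊗[k] A)).comp
    ((TensorProduct.map (ι₁ k A A)
        ((TensorProduct.map T (LinearMap.id : A →ₗ[k] A)).comp ρ)).comp Δ')

/-- Equation (3.3): `S(a) = a_{(-1)} T(a_{(0)})`. -/
def Sfromρ (A : Type*) [Ring A] [Algebra k A] (T : A →ₗ[k] A)
    (ρ : A →ₗ[k] A ⊗[k] A) : A →ₗ[k] A :=
  (LinearMap.mul' k A).comp
    ((TensorProduct.map (LinearMap.id : A →ₗ[k] A) T).comp ρ)

/-- The comultiplication `Δ_R(h) = R · Δ(h) · R⁻¹` obtained by conjugating `Δ` with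
an invertible element `R ∈ H ⊗ H`. -/
def conjComul (H : Type*) [Ring H] [Algebra k H] (R Rinv : H ⊗[k] H)
    (Δ : H →ₗ[k] H ⊗[k] H) : H →ₗ[k] H ⊗[k] H :=
  (LinearMap.mulLeft k R).comp ((LinearMap.mulRight k Rinv).comp Δ)

/-- The braiding candidate `c(x ⊗ y) = x_{(-1)} y_{[0]} ⊗ x_{(0)} y_{[1]}` of
Proposition 2.9, i.e. `c = mult ∘ (ρ ⊗ φ)`. -/
def cmap (A : Type*) [Ring A] [Algebra k A] (Δ Δ' : A →ₗ[k] A ⊗[k] A)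
    (S T : A →ₗ[k] A) : A ⊗[k] A →ₗ[k] A ⊗[k] A :=
  (LinearMap.mul' k (A ⊗[k] A)).comp
    (TensorProduct.map (ρmap k A Δ Δ' S) (φmap k A Δ Δ' S T))

/-- `γ(x ⊗ y) = x y_{(-1)} ⊗ y_{(0)}` for a coaction `ρ(y) = y_{(-1)} ⊗ y_{(0)}`. -/
def γmap (A : Type*) [Ring A] [Algebra k A] (ρ : A →ₗ[k] A ⊗[k] A) :
    A ⊗[k] A →ₗ[k] A ⊗[k] A :=
  (LinearMap.mul' k (A ⊗[k] A)).comp (TensorProduct.map (ι₁ k A A) ρ)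

/-- `σ(x ⊗ y) = y_2 ⊗ x S(y_1) y_3`. -/
def σmap (A : Type*) [Ring A] [Algebra k A] (Δ : A →ₗ[k] A ⊗[k] A)
    (S : A →ₗ[k] A) : A ⊗[k] A →ₗ[k] A ⊗[k] A :=
  (mul₄ k (A ⊗[k] A)).comp
    ((TensorProduct.map (ι₂ k A A)
        (TensorProduct.map ((ι₂ k A A).comp S)
          (TensorProduct.map (ι₁ k A A) (ι₂ k A A)))).comp
      (TensorProduct.map (LinearMap.id : A →ₗ[k] A)
        ((TensorProduct.map (LinearMap.id : A →ₗ[k] A) Δ).comp Δ)))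

/-- The usual tensor product comultiplication `Δ̂` on `A ⊗ H`:
`a ⊗ h ↦ (a_1 ⊗ h_1) ⊗ (a_2 ⊗ h_2)`. -/
def hatΔ (A H : Type*) [Ring A] [Algebra k A] [Ring H] [Algebra k H]
    (ΔA : A →ₗ[k] A ⊗[k] A) (ΔH : H →ₗ[k] H ⊗[k] H) :
    A ⊗[k] H →ₗ[k] (A ⊗[k] H) ⊗[k] (A ⊗[k] H) :=
  (TensorProduct.tensorTensorTensorComm k A A H H).toLinearMap.comp
    (TensorProduct.map ΔA ΔH)

/-- The bicrossed coproduct comultiplication on `A ⊗ H`: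
`Δ̃(a ⊗ h) = a_1 ⊗ a_{2(-1)} h_{1[0]} ⊗ a_{2(0)} h_{1[1]} ⊗ h_2`. -/
def bicrossΔ (A H : Type*) [Ring A] [Algebra k A] [Ring H] [Algebra k H]
    (ΔA : A →ₗ[k] A ⊗[k] A) (ΔH : H →ₗ[k] H ⊗[k] H)
    (ρ : A →ₗ[k] H ⊗[k] A) (φ : H →ₗ[k] H ⊗[k] A) :
    A ⊗[k] H →ₗ[k] (A ⊗[k] H) ⊗[k] (A ⊗[k] H) :=
  (LinearMap.mul' k ((A ⊗[k] H) ⊗[k] (A ⊗[k] H))).comp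
    (TensorProduct.map
      -- a ↦ (a_1 ⊗ a_{2(-1)}) ⊗ (a_{2(0)} ⊗ 1)
      ((TensorProduct.map (LinearMap.id : A ⊗[k] H →ₗ[k] A ⊗[k] H) (ι₁ k A H)).comp
        ((TensorProduct.assoc k A H A).symm.toLinearMap.comp
          ((TensorProduct.map (LinearMap.id : A →ₗ[k] A) ρ).comp ΔA)))
      -- h ↦ (1 ⊗ h_{1[0]}) ⊗ (h_{1[1]} ⊗ h_2)
      ((TensorProduct.map (ι₂ k A H) (LinearMap.id : A ⊗[k] H →ₗ[k] A ⊗[k] H)).comp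
        ((TensorProduct.assoc k H A H).toLinearMap.comp
          ((TensorProduct.map φ (LinearMap.id : H →ₗ[k] H)).comp ΔH))))

/-- The antipode of the bicrossed coproduct:
`S̃(a ⊗ h) = S_A(h_{[1]}) S_A(a_{(0)}) ⊗ S_H(h_{[0]}) S_H(a_{(-1)})`. -/
def bicrossS (A H : Type*) [Ring A] [Algebra k A] [Ring H] [Algebra k H]
    (SA : A →ₗ[k] A) (SH : H →ₗ[k] H)
    (ρ : A →ₗ[k] H ⊗[k] A) (φ : H →ₗ[k] H ⊗[k] A) :
    A ⊗[k] H →ₗ[k] A ⊗[k] H :=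
  (LinearMap.mul' k (A ⊗[k] H)).comp
    ((TensorProduct.map
        ((TensorProduct.map SA SH).comp ((TensorProduct.comm k H A).toLinearMap.comp φ))
        ((TensorProduct.map SA SH).comp ((TensorProduct.comm k H A).toLinearMap.comp ρ))).comp
      (TensorProduct.comm k A H).toLinearMap)

/-- The left hand side `h_{[0]} ⊗ h_{[1]1} ⊗ h_{[1]2}` of equation (4.1), where the
`A`-leg is comultiplied with `Δ'`. -/
def eq41LHS (A H : Type*) [Ring A] [Algebra k A] [Ring H] [Algebra k H]
    (Δ'A : A →ₗ[k] A ⊗[k] A) (φ : H →ₗ[k] H ⊗[k] A) :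
    H →ₗ[k] H ⊗[k] (A ⊗[k] A) :=
  (TensorProduct.map (LinearMap.id : H →ₗ[k] H) Δ'A).comp φ

/-- The right hand side `h_{1[0]} S(h_2) h_{3[0]} ⊗ h_{1[1]} ⊗ h_{3[1]}` of
equation (4.1). -/
def eq41RHS (A H : Type*) [Ring A] [Algebra k A] [Ring H] [Algebra k H]
    (ΔH : H →ₗ[k] H ⊗[k] H) (SH : H →ₗ[k] H) (φ : H →ₗ[k] H ⊗[k] A) :
    H →ₗ[k] H ⊗[k] (A ⊗[k] A) :=
  (mul₃ k (H ⊗[k] (A ⊗[k] A))).comp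
    ((TensorProduct.map
        ((TensorProduct.map (LinearMap.id : H →ₗ[k] H) (ι₁ k A A)).comp φ)
        (TensorProduct.map ((ι₁ k H (A ⊗[k] A)).comp SH)
          ((TensorProduct.map (LinearMap.id : H →ₗ[k] H) (ι₂ k A A)).comp φ))).comp
      ((TensorProduct.map (LinearMap.id : H →ₗ[k] H) ΔH).comp ΔH))

/-- `x ↦ x_{11'} S(x_2) ⊗ x_{12'} ⊗ 1 ∈ H ⊗ (H ⊗ A)`, an auxiliary map for
equations (4.2) and (4.3). -/
def LHmap (A H : Type*) [Ring A] [Algebra k A] [Ring H] [Algebra k H]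
    (ΔH Δ'H : H →ₗ[k] H ⊗[k] H) (SH : H →ₗ[k] H) :
    H →ₗ[k] H ⊗[k] (H ⊗[k] A) :=
  (LinearMap.mul' k (H ⊗[k] (H ⊗[k] A))).comp
    ((TensorProduct.map
        ((TensorProduct.map (LinearMap.id : H →ₗ[k] H) (ι₁ k H A)).comp Δ'H)
        ((ι₁ k H (H ⊗[k] A)).comp SH)).comp ΔH)

/-- The right hand side
`a_{(-1)11'} S(a_{(-1)2}) a_{(0)(-1)'} ⊗ a_{(-1)12'} ⊗ a_{(0)(0)'}` of
equation (4.2). -/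
def eq42RHS (A H : Type*) [Ring A] [Algebra k A] [Ring H] [Algebra k H]
    (ΔH Δ'H : H →ₗ[k] H ⊗[k] H) (SH : H →ₗ[k] H)
    (ρ ρ' : A →ₗ[k] H ⊗[k] A) :
    A →ₗ[k] H ⊗[k] (H ⊗[k] A) :=
  (LinearMap.mul' k (H ⊗[k] (H ⊗[k] A))).comp
    ((TensorProduct.map (LHmap k A H ΔH Δ'H SH)
        ((TensorProduct.map (LinearMap.id : H →ₗ[k] H) (ι₂ k H A)).comp ρ')).comp ρ)

/-- The right hand side
`h_{1[0]11'} S(h_{1[0]2}) h_{1[1](-1)'} h_2 ⊗ h_{1[0]12'} ⊗ h_{1[1](0)'}` of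
equation (4.3). -/
def eq43RHS (A H : Type*) [Ring A] [Algebra k A] [Ring H] [Algebra k H]
    (ΔH Δ'H : H →ₗ[k] H ⊗[k] H) (SH : H →ₗ[k] H)
    (ρ' : A →ₗ[k] H ⊗[k] A) (φ : H →ₗ[k] H ⊗[k] A) :
    H →ₗ[k] H ⊗[k] (H ⊗[k] A) :=
  (LinearMap.mul' k (H ⊗[k] (H ⊗[k] A))).comp
    ((TensorProduct.map
        ((LinearMap.mul' k (H ⊗[k] (H ⊗[k] A))).comp
          ((TensorProduct.map (LHmap k A H ΔH Δ'H SH)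
              ((TensorProduct.map (LinearMap.id : H →ₗ[k] H) (ι₂ k H A)).comp ρ')).comp φ))
        (ι₁ k H (H ⊗[k] A))).comp ΔH)


section Aux

variable {k : Type*} [Field k] {A : Type*} [Ring A] [Algebra k A]

lemma ι₁_apply' (x : A) : ι₁ k A A x = x ⊗ₜ[k] (1 : A) := rfl

lemma step1 (S : A →ₗ[k] A) (Δ' : A →ₗ[k] A ⊗[k] A) (x : A) (t : A ⊗[k] A) :
    (ι₁ k A A x) *
      LinearMap.mul' k (A ⊗[k] A)
        (TensorProduct.map ((ι₁ k A A).comp S) Δ' t)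
    = LinearMap.mul' k (A ⊗[k] A)
        (TensorProduct.map
          ((ι₁ k A A).comp ((LinearMap.mul' k A).comp
            (TensorProduct.map (LinearMap.id : A →ₗ[k] A) S)))
          Δ' ((TensorProduct.assoc k A A A).symm (x ⊗ₜ t))) := by
  induction t using TensorProduct.induction_on with
  | zero => simp only [tmul_zero, LinearEquiv.map_zero, map_zero, mul_zero]
  | tmul u v =>
      simp only [TensorProduct.map_tmul, LinearMap.mul'_apply, LinearMap.comp_apply,
        TensorProduct.assoc_symm_tmul, LinearMap.id_coe, id_eq, ι₁_apply',
        ← mul_assoc, Algebra.TensorProduct.tmul_mul_tmul, mul_one]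
  | add t₁ t₂ h₁ h₂ =>
      simp only [tmul_add, map_add, mul_add, h₁, h₂]

lemma step2 (HS : HopfStruct k A) (Δ' : A →ₗ[k] A ⊗[k] A) (t : A ⊗[k] A) :
    LinearMap.mul' k (A ⊗[k] A)
        (TensorProduct.map
          ((ι₁ k A A).comp ((LinearMap.mul' k A).comp
            (TensorProduct.map (LinearMap.id : A →ₗ[k] A) HS.S)))
          Δ' (TensorProduct.map HS.Δ (LinearMap.id : A →ₗ[k] A) t))
    = Δ' (TensorProduct.lid k A
        (TensorProduct.map HS.ε (LinearMap.id : A →ₗ[k] A) t)) := by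
  induction t using TensorProduct.induction_on with
  | zero => simp
  | tmul x y =>
      simp only [TensorProduct.map_tmul, LinearMap.mul'_apply, LinearMap.comp_apply,
        LinearMap.id_coe, id_eq, TensorProduct.lid_tmul, map_smul]
      rw [HS.antipode_right, ι₁_apply', Algebra.algebraMap_eq_smul_one,
        ← TensorProduct.smul_tmul', smul_mul_assoc]
      congr 1
      rw [← Algebra.TensorProduct.one_def, one_mul]
  | add t₁ t₂ h₁ h₂ =>
      simp only [map_add, h₁, h₂]

end Aux

/-- from the proof of Theorem 2.12.  Let `(A, Δ, Δ')` be a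
Hopf brace with antipode `S` for `Δ`, and endow `A` with the left
`(A, Δ')`-comodule coalgebra structure `ρ(a) = S(a_1) a_{21'} ⊗ a_{22'}`.
Then `π = id_A : (A, Δ) → (A, Δ')` is a bijective 1-cocycle: it is an algebra
isomorphism satisfying
`π(a)_{1'} ⊗ π(a)_{2'} = π(a_1) a_{2(-1)} ⊗ π(a_{2(0)})` for all `a`. -/
theorem identity_is_bijective_one_cocycle {k : Type*} [Field k]
    {A : Type*} [Ring A] [Algebra k A] (HB : HopfBrace k A) :
    Function.Bijective (LinearMap.id : A →ₗ[k] A) ∧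
    IsAlgebraMorphism k A A (LinearMap.id : A →ₗ[k] A) ∧
    (∀ a : A,
      HB.snd.Δ ((LinearMap.id : A →ₗ[k] A) a)
        = LinearMap.mul' k (A ⊗[k] A)
            (TensorProduct.map
              ((ι₁ k A A).comp (LinearMap.id : A →ₗ[k] A))
              ((TensorProduct.map (LinearMap.id : A →ₗ[k] A)
                  (LinearMap.id : A →ₗ[k] A)).comp
                (ρmap k A HB.fst.Δ HB.snd.Δ HB.fst.S))
              (HB.fst.Δ a))) := by
  refine ⟨Function.bijective_id, ⟨fun a b => rfl, rfl⟩, fun a => ?_⟩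
  simp only [LinearMap.id_coe, id_eq, TensorProduct.map_id, LinearMap.comp_id,
    LinearMap.id_comp]
  have key1 : ∀ t : A ⊗[k] A,
      LinearMap.mul' k (A ⊗[k] A)
        (TensorProduct.map (ι₁ k A A)
          (ρmap k A HB.fst.Δ HB.snd.Δ HB.fst.S) t)
      = LinearMap.mul' k (A ⊗[k] A)
          (TensorProduct.map
            ((ι₁ k A A).comp ((LinearMap.mul' k A).comp
              (TensorProduct.map (LinearMap.id : A →ₗ[k] A) HB.fst.S)))
            HB.snd.Δ
            ((TensorProduct.assoc k A A A).symm
              (TensorProduct.map (LinearMap.id : A →ₗ[k] A) HB.fst.Δ t))) := by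
    intro t
    induction t using TensorProduct.induction_on with
    | zero => simp only [map_zero, LinearEquiv.map_zero]
    | tmul x y =>
        simpa [ρmap, LinearMap.comp_apply] using
          step1 HB.fst.S HB.snd.Δ x (HB.fst.Δ y)
    | add t₁ t₂ h₁ h₂ => simp only [map_add, h₁, h₂]
  rw [key1 (HB.fst.Δ a), HB.fst.coassoc a, LinearEquiv.symm_apply_apply,
    step2 HB.fst HB.snd.Δ (HB.fst.Δ a), HB.fst.counit_left a]


end HopfPaper
end
end

section
/- Let (A, Δ, Δ') be a commutative Hopf brace with antipodes S (for Δ) and T (for Δ'). Define ρ(a) = a_{(-1)} ⊗ a_{(0)} = S(a_1) a_{21'} ⊗ a_{22'} and φ(a) = a_{[0]} ⊗ a_{[1]} = (T(a_{1'}))_{(-1)} a_{2'} ⊗ (T(a_{1'}))_{(0)} a_{3'}. Then (A_{Δ'}, A_{Δ'}, ρ, φ) is a Hopf matched pair, i.e. ρ makes A a left (A, Δ')-comodule algebra, φ makes A a right (A, Δ')-comodule algebra, and the conditions (HM1)–(HM4) hold (with Δ' as the comultiplication on both factors). -/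
open TensorProduct

noncomputable section

namespace HopfPaper

variable (k : Type*) [Field k]

/-!
All identities are proved in convolution algebras. For a Hopf structure `H` on `A` and an
algebra `B`, `Hom(A, B)` is a monoid under `H.conv`; postcomposition with an algebra map is
multiplicative, and an algebra map `f` has convolution inverse `f ∘ S`. Writing `⋆` for `Δ` and
`⋆'` for `Δ'`, the definitions read `ρ = (ι₁ ∘ S) ⋆ Δ'` and `φ = (ρ ∘ T) ⋆' Δ'`, whence
`ι₁ ⋆ ρ = Δ'` and `ρ ⋆' φ = Δ'`. Commutativity of `A` makes `S`, `T`, `ρ`, `φ` algebra maps, so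
every map in sight can be pushed through these products.

The brace axiom says `(id ⊗ Δ) ∘ Δ' = D ⋆ (ι₁ ∘ S) ⋆ K` with `D(a) = a_{1'} ⊗ a_{2'} ⊗ 1` and
`K(a) = a_{1'} ⊗ 1 ⊗ a_{2'}`. Contracting it with counits gives `ε' ∘ S = ε`, hence `ε' = ε`
as `S² = id`; contracting it with `x ⊗ y ⊗ z ↦ x ⊗ y S(z)` and using uniqueness of inverses gives
`Δ'(S a) = S(a_1) a_{21'} S(a_3) ⊗ S(a_{22'})`, which is what makes `ρ` coassociative. Finally
`Δ' = ι₁ ⋆ ρ` turns `⋆'`-products of algebra maps into `⋆`-products; this gives (HM2), and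
then the coassociativity of `φ` and (HM3) follow by expanding both sides.
-/

open LinearMap (mul')

local infix:70 " ⊗ₘ " => TensorProduct.map

section AlgebraMorphism

variable {k : Type*} [Field k] {M N P M' N' : Type*} [Ring M] [Algebra k M] [Ring N]
  [Algebra k N] [Ring P] [Algebra k P] [Ring M'] [Algebra k M'] [Ring N'] [Algebra k N']

theorem isAlgebraMorphism_algHom (f : M →ₐ[k] N) : IsAlgebraMorphism k M N f.toLinearMap :=
  ⟨map_mul f, map_one f⟩

namespace IsAlgebraMorphism

theorem id : IsAlgebraMorphism k M M LinearMap.id := isAlgebraMorphism_algHom (AlgHom.id k M)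

theorem comp {g : N →ₗ[k] P} {f : M →ₗ[k] N} (hg : IsAlgebraMorphism k N P g)
    (hf : IsAlgebraMorphism k M N f) : IsAlgebraMorphism k M P (g ∘ₗ f) :=
  ⟨fun a b => by simp [hf.1, hg.1], by simp [hf.2, hg.2]⟩

def toAlgHom {f : M →ₗ[k] N} (hf : IsAlgebraMorphism k M N f) : M →ₐ[k] N :=
  AlgHom.ofLinearMap f hf.2 hf.1

theorem tensorMap {f : M →ₗ[k] M'} {g : N →ₗ[k] N'} (hf : IsAlgebraMorphism k M M' f)
    (hg : IsAlgebraMorphism k N N' g) :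
    IsAlgebraMorphism k (M ⊗[k] N) (M' ⊗[k] N') (f ⊗ₘ g) :=
  isAlgebraMorphism_algHom (Algebra.TensorProduct.map hf.toAlgHom hg.toAlgHom)

theorem id_tensorMap {g : N →ₗ[k] N'} (hg : IsAlgebraMorphism k N N' g) :
    IsAlgebraMorphism k (M ⊗[k] N) (M ⊗[k] N') (LinearMap.id ⊗ₘ g) :=
  id.tensorMap hg

theorem tensorMap_id {f : M →ₗ[k] M'} (hf : IsAlgebraMorphism k M M' f) :
    IsAlgebraMorphism k (M ⊗[k] N) (M' ⊗[k] N) (f ⊗ₘ LinearMap.id) :=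
  hf.tensorMap id

theorem mul'_comp_map (hP : ∀ x y : P, x * y = y * x) {f : M →ₗ[k] P} {g : N →ₗ[k] P}
    (hf : IsAlgebraMorphism k M P f) (hg : IsAlgebraMorphism k N P g) :
    IsAlgebraMorphism k (M ⊗[k] N) P (mul' k P ∘ₗ (f ⊗ₘ g)) := by
  refine ⟨LinearMap.map_mul_of_map_mul_tmul fun a₁ a₂ b₁ b₂ => ?_,
    by simp [Algebra.TensorProduct.one_def, hf.2, hg.2]⟩
  simp only [LinearMap.comp_apply, map_tmul, LinearMap.mul'_apply, hf.1, hg.1]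
  rw [mul_assoc, mul_assoc, ← mul_assoc (f a₂), hP (f a₂) (g b₁), mul_assoc]

end IsAlgebraMorphism

theorem isAlgebraMorphism_ι₁ : IsAlgebraMorphism k M (M ⊗[k] N) (ι₁ k M N) :=
  isAlgebraMorphism_algHom Algebra.TensorProduct.includeLeft

theorem isAlgebraMorphism_ι₂ : IsAlgebraMorphism k N (M ⊗[k] N) (ι₂ k M N) :=
  isAlgebraMorphism_algHom (Algebra.TensorProduct.includeRight : N →ₐ[k] M ⊗[k] N)

theorem isAlgebraMorphism_assoc :
    IsAlgebraMorphism k ((M ⊗[k] N) ⊗[k] P) (M ⊗[k] (N ⊗[k] P))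
      (TensorProduct.assoc k M N P).toLinearMap :=
  isAlgebraMorphism_algHom (Algebra.TensorProduct.assoc k k k M N P).toAlgHom

theorem isAlgebraMorphism_lid : IsAlgebraMorphism k (k ⊗[k] N) N (TensorProduct.lid k N) :=
  isAlgebraMorphism_algHom (Algebra.TensorProduct.lid k N).toAlgHom

theorem isAlgebraMorphism_rid : IsAlgebraMorphism k (M ⊗[k] k) M (TensorProduct.rid k M) :=
  isAlgebraMorphism_algHom (Algebra.TensorProduct.rid k k M).toAlgHom

theorem mul_comm_tensor (hM : ∀ x y : M, x * y = y * x) (hN : ∀ x y : N, x * y = y * x)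
    (x y : M ⊗[k] N) : x * y = y * x := by
  induction x using TensorProduct.induction_on with
  | zero => simp
  | add u v hu hv => simp only [add_mul, mul_add, hu, hv]
  | tmul a b =>
    induction y using TensorProduct.induction_on with
    | zero => simp
    | add u v hu hv => simp only [add_mul, mul_add, hu, hv]
    | tmul c d => simp [hM a c, hN b d]

end AlgebraMorphism

section Inclusions

variable {k : Type*} [Field k] {M N P : Type*} [Ring M] [Algebra k M] [Ring N] [Algebra k N]
  [Ring P] [Algebra k P]

@[simp] theorem ι₁_apply (m : M) : ι₁ k M N m = m ⊗ₜ 1 := rfl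

@[simp] theorem ι₂_apply (n : N) : ι₂ k M N n = 1 ⊗ₜ n := rfl

theorem mul'_comp_map_ι₁_ι₂ :
    mul' k (M ⊗[k] N) ∘ₗ (ι₁ k M N ⊗ₘ ι₂ k M N) = LinearMap.id := by
  ext
  simp

theorem mul'_comp_map_ι₂_ι₁ :
    mul' k (M ⊗[k] M) ∘ₗ (ι₂ k M M ⊗ₘ ι₁ k M M) = (TensorProduct.comm k M M).toLinearMap := by
  ext
  simp

theorem map_id_comp_map_id {M₁ M₂ M₃ : Type*} [AddCommGroup M₁] [Module k M₁]
    [AddCommGroup M₂] [Module k M₂] [AddCommGroup M₃] [Module k M₃]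
    (f : M₂ →ₗ[k] M₃) (g : M₁ →ₗ[k] M₂) :
    (LinearMap.id ⊗ₘ f : M ⊗[k] M₂ →ₗ[k] M ⊗[k] M₃) ∘ₗ (LinearMap.id ⊗ₘ g)
      = LinearMap.id ⊗ₘ (f ∘ₗ g) :=
  (TensorProduct.map_comp LinearMap.id f LinearMap.id g).symm

theorem map_id_comp_ι₁ {M' : Type*} [Ring M'] [Algebra k M'] (f : M →ₗ[k] M') :
    (f ⊗ₘ LinearMap.id) ∘ₗ ι₁ k M N = ι₁ k M' N ∘ₗ f := by
  ext
  simp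

theorem assoc_comp_ι₁ :
    (TensorProduct.assoc k M N P).toLinearMap ∘ₗ ι₁ k (M ⊗[k] N) P
      = LinearMap.id ⊗ₘ ι₁ k N P := by
  ext
  simp

theorem assoc_tmul (X : M ⊗[k] N) (p : P) :
    TensorProduct.assoc k M N P (X ⊗ₜ p) = (LinearMap.id ⊗ₘ (TensorProduct.mk k N P).flip p) X := by
  induction X using TensorProduct.induction_on with
  | zero => simp
  | tmul m n => simp
  | add X Y hX hY => simp [TensorProduct.add_tmul, hX, hY]

end Inclusions

namespace HopfStruct

variable {k : Type*} [Field k] {A B B' : Type*} [Ring A] [Algebra k A] [Ring B] [Algebra k B]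
  [Ring B'] [Algebra k B'] (HS : HopfStruct k A)

/-- Used only locally, to borrow Mathlib's convolution algebra `WithConv (A →ₗ[k] B)` (whose
product is definitionally `HS.conv`) and its lemmas on antipodes. -/
abbrev toHopfAlgebra : HopfAlgebra k A where
  comul := HS.Δ
  counit := HS.ε
  coassoc := by ext a; exact (HS.coassoc a).symm
  rTensor_counit_comp_comul := by
    ext a
    exact (TensorProduct.lid k A).injective ((HS.counit_left a).trans (by simp))
  lTensor_counit_comp_comul := by
    ext a
    exact (TensorProduct.rid k A).injective ((HS.counit_right a).trans (by simp))
  counit_one := HS.counit_one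
  mul_compr₂_counit := by ext a b; exact HS.counit_mul a b
  comul_one := HS.comul_one
  mul_compr₂_comul := by ext a b; exact HS.comul_mul a b
  antipode := HS.S
  mul_antipode_rTensor_comul := by ext a; exact HS.antipode_left a
  mul_antipode_lTensor_comul := by ext a; exact HS.antipode_right a

def conv (f g : A →ₗ[k] B) : A →ₗ[k] B := mul' k B ∘ₗ (f ⊗ₘ g) ∘ₗ HS.Δ

def convOne : A →ₗ[k] B := Algebra.linearMap k B ∘ₗ HS.ε

open WithConv

theorem conv_assoc (f g h : A →ₗ[k] B) :
    HS.conv (HS.conv f g) h = HS.conv f (HS.conv g h) := by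
  let _ := HS.toHopfAlgebra
  exact congrArg ofConv (mul_assoc (toConv f) (toConv g) (toConv h))

theorem convOne_conv (f : A →ₗ[k] B) : HS.conv HS.convOne f = f := by
  let _ := HS.toHopfAlgebra
  exact congrArg ofConv (one_mul (toConv f))

theorem conv_convOne (f : A →ₗ[k] B) : HS.conv f HS.convOne = f := by
  let _ := HS.toHopfAlgebra
  exact congrArg ofConv (mul_one (toConv f))

theorem eq_of_conv_eq_convOne {f g h : A →ₗ[k] B} (hfg : HS.conv f g = HS.convOne)
    (hgh : HS.conv g h = HS.convOne) : f = h := by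
  let _ := HS.toHopfAlgebra
  exact congrArg ofConv
    (left_inv_eq_right_inv (a := toConv g) (congrArg toConv hfg) (congrArg toConv hgh))

theorem comp_conv {ψ : B →ₗ[k] B'} (hψ : IsAlgebraMorphism k B B' ψ) (f g : A →ₗ[k] B) :
    ψ ∘ₗ HS.conv f g = HS.conv (ψ ∘ₗ f) (ψ ∘ₗ g) := by
  let _ := HS.toHopfAlgebra
  exact LinearMap.algHom_comp_convMul_distrib hψ.toAlgHom (toConv f) (toConv g)

theorem comp_convOne {ψ : B →ₗ[k] B'} (hψ : IsAlgebraMorphism k B B' ψ) :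
    ψ ∘ₗ (HS.convOne : A →ₗ[k] B) = HS.convOne := by
  ext
  simp [convOne, Algebra.algebraMap_eq_smul_one, hψ.2]

theorem convOne_eq_ε : (HS.convOne : A →ₗ[k] k) = HS.ε := by
  ext
  simp [convOne]

theorem conv_id_S : HS.conv LinearMap.id HS.S = HS.convOne :=
  LinearMap.ext HS.antipode_right

theorem conv_S_id : HS.conv HS.S LinearMap.id = HS.convOne :=
  LinearMap.ext HS.antipode_left

theorem conv_self_comp_S {f : A →ₗ[k] B} (hf : IsAlgebraMorphism k A B f) :
    HS.conv f (f ∘ₗ HS.S) = HS.convOne := by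
  simpa [comp_conv HS hf, comp_convOne HS hf] using congrArg (f ∘ₗ ·) HS.conv_id_S

theorem conv_comp_S_self {f : A →ₗ[k] B} (hf : IsAlgebraMorphism k A B f) :
    HS.conv (f ∘ₗ HS.S) f = HS.convOne := by
  simpa [comp_conv HS hf, comp_convOne HS hf] using congrArg (f ∘ₗ ·) HS.conv_S_id

theorem S_one : HS.S 1 = 1 := by
  let _ := HS.toHopfAlgebra
  exact HopfAlgebra.antipode_one (R := k)

theorem ε_comp_S : HS.ε ∘ₗ HS.S = HS.ε := by
  let _ := HS.toHopfAlgebra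
  exact HopfAlgebra.counit_comp_antipode (R := k)

theorem convOne_comp_S : (HS.convOne : A →ₗ[k] B) ∘ₗ HS.S = HS.convOne := by
  rw [convOne, LinearMap.comp_assoc, ε_comp_S]

theorem isAlgebraMorphism_Δ : IsAlgebraMorphism k A (A ⊗[k] A) HS.Δ :=
  ⟨HS.comul_mul, HS.comul_one⟩

theorem isAlgebraMorphism_ε : IsAlgebraMorphism k A k HS.ε :=
  ⟨HS.counit_mul, HS.counit_one⟩

theorem isAlgebraMorphism_S (hcomm : ∀ x y : A, x * y = y * x) :
    IsAlgebraMorphism k A A HS.S := by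
  let _ := HS.toHopfAlgebra
  exact ⟨fun a b => (HopfAlgebra.antipode_mul_antidistrib (R := k) a b).trans (hcomm _ _),
    HS.S_one⟩

theorem isAlgebraMorphism_conv (hB : ∀ x y : B, x * y = y * x) {f g : A →ₗ[k] B}
    (hf : IsAlgebraMorphism k A B f) (hg : IsAlgebraMorphism k A B g) :
    IsAlgebraMorphism k A B (HS.conv f g) :=
  (IsAlgebraMorphism.mul'_comp_map hB hf hg).comp HS.isAlgebraMorphism_Δ

theorem S_comp_S (hcomm : ∀ x y : A, x * y = y * x) : HS.S ∘ₗ HS.S = LinearMap.id :=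
  (HS.eq_of_conv_eq_convOne HS.conv_id_S
    (HS.conv_self_comp_S (HS.isAlgebraMorphism_S hcomm))).symm

theorem Δ_comp_S :
    HS.Δ ∘ₗ HS.S = (TensorProduct.comm k A A).toLinearMap ∘ₗ (HS.S ⊗ₘ HS.S) ∘ₗ HS.Δ := by
  have hΔ : HS.Δ = HS.conv (ι₁ k A A) (ι₂ k A A) := by
    rw [conv, ← LinearMap.comp_assoc, mul'_comp_map_ι₁_ι₂, LinearMap.id_comp]
  have hS : (TensorProduct.comm k A A).toLinearMap ∘ₗ (HS.S ⊗ₘ HS.S) ∘ₗ HS.Δ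
      = HS.conv (ι₂ k A A ∘ₗ HS.S) (ι₁ k A A ∘ₗ HS.S) := by
    rw [conv, TensorProduct.map_comp, ← mul'_comp_map_ι₂_ι₁]
    rfl
  refine HS.eq_of_conv_eq_convOne (HS.conv_comp_S_self HS.isAlgebraMorphism_Δ) ?_
  rw [hS, hΔ, HS.conv_assoc, ← HS.conv_assoc (ι₂ k A A),
    HS.conv_self_comp_S isAlgebraMorphism_ι₂, HS.convOne_conv,
    HS.conv_self_comp_S isAlgebraMorphism_ι₁]

theorem conv_comp_S (hB : ∀ x y : B, x * y = y * x) (f g : A →ₗ[k] B) :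
    HS.conv f g ∘ₗ HS.S = HS.conv (g ∘ₗ HS.S) (f ∘ₗ HS.S) := by
  have hswap : mul' k B ∘ₗ (f ⊗ₘ g) ∘ₗ (TensorProduct.comm k A A).toLinearMap
      = mul' k B ∘ₗ (g ⊗ₘ f) := by
    ext
    exact hB _ _
  rw [conv, LinearMap.comp_assoc, LinearMap.comp_assoc, Δ_comp_S, ← LinearMap.comp_assoc,
    ← LinearMap.comp_assoc, LinearMap.comp_assoc _ (f ⊗ₘ g), hswap, LinearMap.comp_assoc,
    ← LinearMap.comp_assoc _ (HS.S ⊗ₘ HS.S), ← TensorProduct.map_comp]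
  rfl

theorem lid_comp_Δ :
    (TensorProduct.lid k A).toLinearMap ∘ₗ (HS.ε ⊗ₘ LinearMap.id) ∘ₗ HS.Δ = LinearMap.id :=
  LinearMap.ext HS.counit_left

theorem rid_comp_Δ :
    (TensorProduct.rid k A).toLinearMap ∘ₗ (LinearMap.id ⊗ₘ HS.ε) ∘ₗ HS.Δ = LinearMap.id :=
  LinearMap.ext HS.counit_right

theorem map_id_convOne_comp_Δ : (LinearMap.id ⊗ₘ HS.convOne) ∘ₗ HS.Δ = ι₁ k A A := by
  have h : (LinearMap.id ⊗ₘ (HS.convOne : A →ₗ[k] A))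
      = ι₁ k A A ∘ₗ (TensorProduct.rid k A).toLinearMap ∘ₗ (LinearMap.id ⊗ₘ HS.ε) := by
    ext
    simp [convOne, Algebra.algebraMap_eq_smul_one, TensorProduct.smul_tmul']
  rw [h, LinearMap.comp_assoc, LinearMap.comp_assoc, HS.rid_comp_Δ, LinearMap.comp_id]

theorem assoc_comp_map_Δ_comp_Δ :
    (TensorProduct.assoc k A A A).toLinearMap ∘ₗ (HS.Δ ⊗ₘ LinearMap.id) ∘ₗ HS.Δ
      = (LinearMap.id ⊗ₘ HS.Δ) ∘ₗ HS.Δ :=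
  LinearMap.ext fun a => (HS.coassoc a).symm

theorem conv_ι₁_ι₂_comp {N : Type*} [Ring N] [Algebra k N] (g : A →ₗ[k] N) :
    HS.conv (ι₁ k A N) (ι₂ k A N ∘ₗ g) = (LinearMap.id ⊗ₘ g) ∘ₗ HS.Δ := by
  have h : ι₁ k A N ⊗ₘ ι₂ k A N ∘ₗ g = (ι₁ k A N ⊗ₘ ι₂ k A N) ∘ₗ (LinearMap.id ⊗ₘ g) :=
    TensorProduct.map_comp (ι₁ k A N) (ι₂ k A N) LinearMap.id g
  rw [conv, h, ← LinearMap.comp_assoc, ← LinearMap.comp_assoc, mul'_comp_map_ι₁_ι₂,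
    LinearMap.id_comp]

theorem conv_map_id_ι₁_ι₂_ι₂ {M N : Type*} [Ring M] [Algebra k M] [Ring N] [Algebra k N]
    (f : A →ₗ[k] M ⊗[k] N) :
    HS.conv ((LinearMap.id ⊗ₘ ι₁ k N A) ∘ₗ f) (ι₂ k M (N ⊗[k] A) ∘ₗ ι₂ k N A)
      = (TensorProduct.assoc k M N A).toLinearMap ∘ₗ (f ⊗ₘ LinearMap.id) ∘ₗ HS.Δ := by
  have h : mul' k _ ∘ₗ ((LinearMap.id ⊗ₘ ι₁ k N A) ⊗ₘ (ι₂ k M (N ⊗[k] A) ∘ₗ ι₂ k N A))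
      = (TensorProduct.assoc k M N A).toLinearMap := by
    apply TensorProduct.ext_threefold
    intro x y z
    simp
  rw [← h]
  ext
  simp [conv, TensorProduct.map_map]

end HopfStruct

namespace HopfBrace

variable {k : Type*} [Field k] {A B : Type*} [Ring A] [Algebra k A] [Ring B] [Algebra k B]
  (HB : HopfBrace k A)

abbrev ρ : A →ₗ[k] A ⊗[k] A := ρmap k A HB.fst.Δ HB.snd.Δ HB.fst.S

abbrev φ : A →ₗ[k] A ⊗[k] A := φmap k A HB.fst.Δ HB.snd.Δ HB.fst.S HB.snd.S

theorem braceRHS_eq_conv : braceRHS k A HB.fst.Δ HB.snd.Δ HB.fst.S =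
    HB.fst.conv ((LinearMap.id ⊗ₘ ι₁ k A A) ∘ₗ HB.snd.Δ)
      (HB.fst.conv (ι₁ k A (A ⊗[k] A) ∘ₗ HB.fst.S)
        ((LinearMap.id ⊗ₘ ι₂ k A A) ∘ₗ HB.snd.Δ)) := by
  ext
  simp [braceRHS, mul₃, HopfStruct.conv, TensorProduct.map_map]

theorem map_id_comul_fst_comp_comul_snd :
    (LinearMap.id ⊗ₘ HB.fst.Δ) ∘ₗ HB.snd.Δ =
      HB.fst.conv ((LinearMap.id ⊗ₘ ι₁ k A A) ∘ₗ HB.snd.Δ)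
        (HB.fst.conv (ι₁ k A (A ⊗[k] A) ∘ₗ HB.fst.S)
          ((LinearMap.id ⊗ₘ ι₂ k A A) ∘ₗ HB.snd.Δ)) :=
  (LinearMap.ext HB.compat).trans HB.braceRHS_eq_conv

theorem comp_map_id_comul_fst_comp_comul_snd {ψ : A ⊗[k] (A ⊗[k] A) →ₗ[k] B}
    (hψ : IsAlgebraMorphism k _ B ψ) :
    ψ ∘ₗ (LinearMap.id ⊗ₘ HB.fst.Δ) ∘ₗ HB.snd.Δ =
      HB.fst.conv (ψ ∘ₗ (LinearMap.id ⊗ₘ ι₁ k A A) ∘ₗ HB.snd.Δ)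
        (HB.fst.conv (ψ ∘ₗ ι₁ k A (A ⊗[k] A) ∘ₗ HB.fst.S)
          (ψ ∘ₗ (LinearMap.id ⊗ₘ ι₂ k A A) ∘ₗ HB.snd.Δ)) := by
  rw [map_id_comul_fst_comp_comul_snd, HB.fst.comp_conv hψ, HB.fst.comp_conv hψ]

theorem ε_snd_comp_S : HB.snd.ε ∘ₗ HB.fst.S = HB.fst.ε := by
  -- contract the brace axiom with `x ⊗ y ⊗ z ↦ ε'(x) ε(y) ε(z)`: it becomes `ε = ε ⋆ (ε' ∘ S) ⋆ ε`
  set ε₂ : A ⊗[k] A →ₗ[k] k := mul' k k ∘ₗ (HB.fst.ε ⊗ₘ HB.fst.ε)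
  have hε₂ : IsAlgebraMorphism k _ k ε₂ :=
    .mul'_comp_map mul_comm HB.fst.isAlgebraMorphism_ε HB.fst.isAlgebraMorphism_ε
  set E := mul' k k ∘ₗ (HB.snd.ε ⊗ₘ ε₂)
  have hE : ∀ g : A →ₗ[k] A ⊗[k] A,
      E ∘ₗ (LinearMap.id ⊗ₘ g) ∘ₗ HB.snd.Δ = HB.snd.conv HB.snd.ε (ε₂ ∘ₗ g) := by
    intro g
    ext
    simp [E, HopfStruct.conv, TensorProduct.map_map]
  have hΔ : ε₂ ∘ₗ HB.fst.Δ = HB.fst.ε := by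
    change HB.fst.conv HB.fst.ε HB.fst.ε = _
    rw [← HB.fst.convOne_eq_ε, HB.fst.convOne_conv]
  have hι₁ : ε₂ ∘ₗ ι₁ k A A = HB.fst.ε := by ext; simp [ε₂, HB.fst.counit_one]
  have hι₂ : ε₂ ∘ₗ ι₂ k A A = HB.fst.ε := by ext; simp [ε₂, HB.fst.counit_one]
  have hS : E ∘ₗ ι₁ k A (A ⊗[k] A) ∘ₗ HB.fst.S = HB.snd.ε ∘ₗ HB.fst.S := by
    ext; simp [E, ε₂, Algebra.TensorProduct.one_def, HB.fst.counit_one]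
  have key := HB.comp_map_id_comul_fst_comp_comul_snd
    (.mul'_comp_map mul_comm HB.snd.isAlgebraMorphism_ε hε₂)
  rw [hE, hE, hE, hΔ, hι₁, hι₂, hS, ← HB.snd.convOne_eq_ε, HB.snd.convOne_conv,
    ← HB.fst.convOne_eq_ε, HB.fst.convOne_conv, HB.fst.conv_convOne] at key
  exact key.symm

theorem ε_snd_S (a : A) : HB.snd.ε (HB.fst.S a) = HB.fst.ε a :=
  LinearMap.congr_fun HB.ε_snd_comp_S a

theorem ε_snd_eq (hcomm : ∀ x y : A, x * y = y * x) : HB.snd.ε = HB.fst.ε := by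
  rw [← HB.fst.ε_comp_S, ← HB.ε_snd_comp_S, LinearMap.comp_assoc, HB.fst.S_comp_S hcomm,
    LinearMap.comp_id]

theorem ρ_eq_conv : HB.ρ = HB.fst.conv (ι₁ k A A ∘ₗ HB.fst.S) HB.snd.Δ := rfl

theorem isAlgebraMorphism_ρ (hcomm : ∀ x y : A, x * y = y * x) :
    IsAlgebraMorphism k A (A ⊗[k] A) HB.ρ :=
  HB.fst.isAlgebraMorphism_conv (mul_comm_tensor hcomm hcomm)
    (isAlgebraMorphism_ι₁.comp (HB.fst.isAlgebraMorphism_S hcomm)) HB.snd.isAlgebraMorphism_Δ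

theorem conv_ι₁_ρ : HB.fst.conv (ι₁ k A A) HB.ρ = HB.snd.Δ := by
  rw [ρ_eq_conv, ← HB.fst.conv_assoc, HB.fst.conv_self_comp_S isAlgebraMorphism_ι₁,
    HB.fst.convOne_conv]

theorem lid_comp_ρ :
    (TensorProduct.lid k A).toLinearMap ∘ₗ (HB.snd.ε ⊗ₘ LinearMap.id) ∘ₗ HB.ρ
      = LinearMap.id := by
  have hψ := isAlgebraMorphism_lid.comp (HB.snd.isAlgebraMorphism_ε.tensorMap_id (N := A))
  have hS : (TensorProduct.lid k A).toLinearMap ∘ₗ (HB.snd.ε ⊗ₘ LinearMap.id) ∘ₗ ι₁ k A A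
      ∘ₗ HB.fst.S = HB.fst.convOne := by
    ext; simp [HopfStruct.convOne, Algebra.algebraMap_eq_smul_one, HB.ε_snd_S]
  rw [ρ_eq_conv, ← LinearMap.comp_assoc, HB.fst.comp_conv hψ]
  simp only [LinearMap.comp_assoc]
  rw [HB.snd.lid_comp_Δ, hS, HB.fst.convOne_conv]

theorem rid_comp_ρ (hcomm : ∀ x y : A, x * y = y * x) :
    (TensorProduct.rid k A).toLinearMap ∘ₗ (LinearMap.id ⊗ₘ HB.snd.ε) ∘ₗ HB.ρ
      = HB.snd.convOne := by
  have hψ := isAlgebraMorphism_rid.comp (HB.snd.isAlgebraMorphism_ε.id_tensorMap (M := A))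
  have hS : (TensorProduct.rid k A).toLinearMap ∘ₗ (LinearMap.id ⊗ₘ HB.snd.ε) ∘ₗ ι₁ k A A
      ∘ₗ HB.fst.S = HB.fst.S := by
    ext; simp [HB.snd.counit_one]
  rw [ρ_eq_conv, ← LinearMap.comp_assoc, HB.fst.comp_conv hψ]
  simp only [LinearMap.comp_assoc]
  rw [HB.snd.rid_comp_Δ, hS, HB.fst.conv_S_id, HopfStruct.convOne, HopfStruct.convOne,
    HB.ε_snd_eq hcomm]

theorem conv_comul_snd_conv_eq_ι₁ (hcomm : ∀ x y : A, x * y = y * x) :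
    HB.fst.conv HB.snd.Δ
        (HB.fst.conv (ι₁ k A A ∘ₗ HB.fst.S) ((LinearMap.id ⊗ₘ HB.fst.S) ∘ₗ HB.snd.Δ))
      = ι₁ k A A := by
  set P := mul' k A ∘ₗ (LinearMap.id ⊗ₘ HB.fst.S)
  have hP : IsAlgebraMorphism k _ _ P := .mul'_comp_map hcomm .id (HB.fst.isAlgebraMorphism_S hcomm)
  have hΔ : P ∘ₗ HB.fst.Δ = HB.snd.convOne := by
    rw [LinearMap.comp_assoc, ← HopfStruct.conv, HB.fst.conv_id_S, HopfStruct.convOne,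
      HopfStruct.convOne, HB.ε_snd_eq hcomm]
  have hι₁ : P ∘ₗ ι₁ k A A = LinearMap.id := by ext; simp [P, HB.fst.S_one]
  have hι₂ : P ∘ₗ ι₂ k A A = HB.fst.S := by ext; simp [P]
  have hS : (LinearMap.id ⊗ₘ P) ∘ₗ ι₁ k A (A ⊗[k] A) ∘ₗ HB.fst.S = ι₁ k A A ∘ₗ HB.fst.S := by
    ext; simp [P, Algebra.TensorProduct.one_def, HB.fst.S_one]
  have key := HB.comp_map_id_comul_fst_comp_comul_snd (IsAlgebraMorphism.id_tensorMap (M := A) hP)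
  rw [hS] at key
  simp only [← LinearMap.comp_assoc, map_id_comp_map_id, hΔ, hι₁, hι₂, TensorProduct.map_id,
    LinearMap.id_comp, HB.snd.map_id_convOne_comp_Δ] at key
  exact key.symm

theorem comul_snd_comp_S (hcomm : ∀ x y : A, x * y = y * x) :
    HB.snd.Δ ∘ₗ HB.fst.S = HB.fst.conv (ι₁ k A A ∘ₗ HB.fst.S)
      (HB.fst.conv ((LinearMap.id ⊗ₘ HB.fst.S) ∘ₗ HB.snd.Δ) (ι₁ k A A ∘ₗ HB.fst.S)) := by
  refine HB.fst.eq_of_conv_eq_convOne (HB.fst.conv_comp_S_self HB.snd.isAlgebraMorphism_Δ) ?_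
  rw [← HB.fst.conv_assoc (ι₁ k A A ∘ₗ HB.fst.S), ← HB.fst.conv_assoc,
    HB.conv_comul_snd_conv_eq_ι₁ hcomm, HB.fst.conv_self_comp_S isAlgebraMorphism_ι₁]

theorem map_id_ρ_comp_ρ_eq_conv (hcomm : ∀ x y : A, x * y = y * x) :
    (LinearMap.id ⊗ₘ HB.ρ) ∘ₗ HB.ρ = HB.fst.conv (ι₁ k A (A ⊗[k] A) ∘ₗ HB.fst.S)
      (HB.fst.conv ((LinearMap.id ⊗ₘ ι₁ k A A ∘ₗ HB.fst.S) ∘ₗ HB.snd.Δ)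
        (HB.fst.conv (ι₁ k A (A ⊗[k] A) ∘ₗ HB.fst.S)
          ((LinearMap.id ⊗ₘ HB.snd.Δ) ∘ₗ HB.snd.Δ))) := by
  have hρ := HB.isAlgebraMorphism_ρ hcomm
  set ρ₀ := mul' k (A ⊗[k] A) ∘ₗ (ι₁ k A A ∘ₗ HB.fst.S ⊗ₘ HB.snd.Δ)
  have hρ₀ : IsAlgebraMorphism k _ _ ρ₀ := .mul'_comp_map (mul_comm_tensor hcomm hcomm)
    (isAlgebraMorphism_ι₁.comp (HB.fst.isAlgebraMorphism_S hcomm)) HB.snd.isAlgebraMorphism_Δ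
  have hι₁ : ρ₀ ∘ₗ ι₁ k A A = ι₁ k A A ∘ₗ HB.fst.S := by ext; simp [ρ₀, HB.snd.comul_one]
  have hι₂ : ρ₀ ∘ₗ ι₂ k A A = HB.snd.Δ := by
    ext; simp [ρ₀, HB.fst.S_one, ← Algebra.TensorProduct.one_def]
  have hS : (LinearMap.id ⊗ₘ ρ₀) ∘ₗ ι₁ k A (A ⊗[k] A) ∘ₗ HB.fst.S
      = ι₁ k A (A ⊗[k] A) ∘ₗ HB.fst.S := by
    ext; simp [Algebra.TensorProduct.one_def, ρ₀, HB.fst.S_one, HB.snd.comul_one]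
  have hρS : (LinearMap.id ⊗ₘ HB.ρ) ∘ₗ ι₁ k A A ∘ₗ HB.fst.S = ι₁ k A (A ⊗[k] A) ∘ₗ HB.fst.S := by
    ext; simp [Algebra.TensorProduct.one_def, hρ.2]
  -- `ρ = ρ₀ ∘ Δ`, so `(id ⊗ ρ) ∘ Δ'` is read off the brace axiom
  have key := HB.comp_map_id_comul_fst_comp_comul_snd (IsAlgebraMorphism.id_tensorMap (M := A) hρ₀)
  rw [hS] at key
  simp only [← LinearMap.comp_assoc, map_id_comp_map_id, hι₁, hι₂] at key
  refine (HB.fst.comp_conv (.id_tensorMap hρ) _ _).trans ?_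
  rw [hρS]
  exact congrArg _ key

theorem assoc_comp_map_comul_snd_comp_ρ_eq_conv (hcomm : ∀ x y : A, x * y = y * x) :
    (TensorProduct.assoc k A A A).toLinearMap ∘ₗ (HB.snd.Δ ⊗ₘ LinearMap.id) ∘ₗ HB.ρ
      = HB.fst.conv (HB.fst.conv (ι₁ k A (A ⊗[k] A) ∘ₗ HB.fst.S)
          (HB.fst.conv ((LinearMap.id ⊗ₘ ι₁ k A A ∘ₗ HB.fst.S) ∘ₗ HB.snd.Δ)
            (ι₁ k A (A ⊗[k] A) ∘ₗ HB.fst.S)))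
        ((LinearMap.id ⊗ₘ HB.snd.Δ) ∘ₗ HB.snd.Δ) := by
  set Θ := (TensorProduct.assoc k A A A).toLinearMap ∘ₗ (HB.snd.Δ ⊗ₘ LinearMap.id)
  have hΘ : IsAlgebraMorphism k _ _ Θ :=
    isAlgebraMorphism_assoc.comp HB.snd.isAlgebraMorphism_Δ.tensorMap_id
  have hι : IsAlgebraMorphism k (A ⊗[k] A) _ (LinearMap.id ⊗ₘ ι₁ k A A) :=
    .id_tensorMap isAlgebraMorphism_ι₁
  have hΘι₁ : Θ ∘ₗ ι₁ k A A = (LinearMap.id ⊗ₘ ι₁ k A A) ∘ₗ HB.snd.Δ := by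
    rw [LinearMap.comp_assoc, map_id_comp_ι₁, ← LinearMap.comp_assoc, assoc_comp_ι₁]
  have hS : (LinearMap.id ⊗ₘ ι₁ k A A) ∘ₗ ι₁ k A A ∘ₗ HB.fst.S
      = ι₁ k A (A ⊗[k] A) ∘ₗ HB.fst.S := by
    ext; simp [Algebra.TensorProduct.one_def]
  rw [ρ_eq_conv, ← LinearMap.comp_assoc, HB.fst.comp_conv hΘ, ← LinearMap.comp_assoc, hΘι₁,
    LinearMap.comp_assoc, HB.comul_snd_comp_S hcomm, HB.fst.comp_conv hι, HB.fst.comp_conv hι,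
    hS, ← LinearMap.comp_assoc _ (LinearMap.id ⊗ₘ HB.fst.S), map_id_comp_map_id,
    LinearMap.comp_assoc, HB.snd.assoc_comp_map_Δ_comp_Δ]

theorem map_id_ρ_comp_ρ (hcomm : ∀ x y : A, x * y = y * x) :
    (LinearMap.id ⊗ₘ HB.ρ) ∘ₗ HB.ρ
      = (TensorProduct.assoc k A A A).toLinearMap ∘ₗ (HB.snd.Δ ⊗ₘ LinearMap.id) ∘ₗ HB.ρ := by
  rw [HB.map_id_ρ_comp_ρ_eq_conv hcomm, HB.assoc_comp_map_comul_snd_comp_ρ_eq_conv hcomm,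
    HB.fst.conv_assoc, HB.fst.conv_assoc]

theorem conv_snd_eq_conv_fst (hB : ∀ x y : B, x * y = y * x)
    {f g : A →ₗ[k] B} (hf : IsAlgebraMorphism k A B f) (hg : IsAlgebraMorphism k A B g) :
    HB.snd.conv f g = HB.fst.conv f (mul' k B ∘ₗ (f ⊗ₘ g) ∘ₗ HB.ρ) := by
  have h : (mul' k B ∘ₗ (f ⊗ₘ g)) ∘ₗ ι₁ k A A = f := by ext; simp [hg.2]
  rw [HopfStruct.conv, ← HB.conv_ι₁_ρ, ← LinearMap.comp_assoc,
    HB.fst.comp_conv (.mul'_comp_map hB hf hg), h]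
  rfl

theorem map_id_comul_fst_comp_ρ :
    (LinearMap.id ⊗ₘ HB.fst.Δ) ∘ₗ HB.ρ
      = HB.fst.conv ((LinearMap.id ⊗ₘ ι₁ k A A) ∘ₗ HB.ρ)
          ((LinearMap.id ⊗ₘ ι₂ k A A) ∘ₗ HB.ρ) := by
  have hS : ∀ {g : A →ₗ[k] A ⊗[k] A}, g 1 = 1 →
      (LinearMap.id ⊗ₘ g) ∘ₗ ι₁ k A A ∘ₗ HB.fst.S = ι₁ k A (A ⊗[k] A) ∘ₗ HB.fst.S := by
    intro g hg
    ext; simp [hg]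
  rw [ρ_eq_conv, HB.fst.comp_conv (.id_tensorMap HB.fst.isAlgebraMorphism_Δ),
    HB.fst.comp_conv (.id_tensorMap isAlgebraMorphism_ι₁),
    HB.fst.comp_conv (.id_tensorMap isAlgebraMorphism_ι₂), map_id_comul_fst_comp_comul_snd,
    hS HB.fst.comul_one, hS isAlgebraMorphism_ι₁.2, hS isAlgebraMorphism_ι₂.2,
    HB.fst.conv_assoc]

theorem map_id_comul_snd_comp_ρ_eq_conv (hcomm : ∀ x y : A, x * y = y * x) :
    (LinearMap.id ⊗ₘ HB.snd.Δ) ∘ₗ HB.ρ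
      = HB.fst.conv ((LinearMap.id ⊗ₘ ι₁ k A A) ∘ₗ HB.ρ) ((LinearMap.id ⊗ₘ HB.ρ) ∘ₗ HB.ρ) := by
  have hρ := HB.isAlgebraMorphism_ρ hcomm
  set γ := mul' k (A ⊗[k] A) ∘ₗ (ι₁ k A A ⊗ₘ HB.ρ)
  have hγ : IsAlgebraMorphism k _ _ γ :=
    .mul'_comp_map (mul_comm_tensor hcomm hcomm) isAlgebraMorphism_ι₁ hρ
  have hγΔ : γ ∘ₗ HB.fst.Δ = HB.snd.Δ := HB.conv_ι₁_ρ
  have hι₁ : γ ∘ₗ ι₁ k A A = ι₁ k A A := by ext; simp [γ, hρ.2]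
  have hι₂ : γ ∘ₗ ι₂ k A A = HB.ρ := by ext; simp [γ, ← Algebra.TensorProduct.one_def]
  rw [← hγΔ, ← map_id_comp_map_id, LinearMap.comp_assoc, map_id_comul_fst_comp_ρ,
    HB.fst.comp_conv (.id_tensorMap hγ), ← LinearMap.comp_assoc, map_id_comp_map_id, hι₁,
    ← LinearMap.comp_assoc, map_id_comp_map_id, hι₂]

theorem φ_eq_conv : HB.φ = HB.snd.conv (HB.ρ ∘ₗ HB.snd.S) HB.snd.Δ := by
  ext
  simp [φmap, HopfStruct.conv, TensorProduct.map_map]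

theorem isAlgebraMorphism_φ (hcomm : ∀ x y : A, x * y = y * x) :
    IsAlgebraMorphism k A (A ⊗[k] A) HB.φ := by
  rw [φ_eq_conv]
  exact HB.snd.isAlgebraMorphism_conv (mul_comm_tensor hcomm hcomm)
    ((HB.isAlgebraMorphism_ρ hcomm).comp (HB.snd.isAlgebraMorphism_S hcomm))
    HB.snd.isAlgebraMorphism_Δ

theorem conv_ρ_φ (hcomm : ∀ x y : A, x * y = y * x) : HB.snd.conv HB.ρ HB.φ = HB.snd.Δ := by
  rw [φ_eq_conv, ← HB.snd.conv_assoc, HB.snd.conv_self_comp_S (HB.isAlgebraMorphism_ρ hcomm),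
    HB.snd.convOne_conv]

theorem rid_comp_φ (hcomm : ∀ x y : A, x * y = y * x) :
    (TensorProduct.rid k A).toLinearMap ∘ₗ (LinearMap.id ⊗ₘ HB.snd.ε) ∘ₗ HB.φ
      = LinearMap.id := by
  have hψ := isAlgebraMorphism_rid.comp (HB.snd.isAlgebraMorphism_ε.id_tensorMap (M := A))
  rw [φ_eq_conv, ← LinearMap.comp_assoc, HB.snd.comp_conv hψ, ← LinearMap.comp_assoc HB.snd.S,
    LinearMap.comp_assoc HB.ρ, HB.rid_comp_ρ hcomm, LinearMap.comp_assoc, HB.snd.rid_comp_Δ,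
    HB.snd.convOne_comp_S, HB.snd.convOne_conv]

theorem lid_comp_φ :
    (TensorProduct.lid k A).toLinearMap ∘ₗ (HB.snd.ε ⊗ₘ LinearMap.id) ∘ₗ HB.φ
      = HB.snd.convOne := by
  have hψ := isAlgebraMorphism_lid.comp (HB.snd.isAlgebraMorphism_ε.tensorMap_id (N := A))
  rw [φ_eq_conv, ← LinearMap.comp_assoc, HB.snd.comp_conv hψ, ← LinearMap.comp_assoc HB.snd.S,
    LinearMap.comp_assoc HB.ρ, HB.lid_comp_ρ, LinearMap.comp_assoc, HB.snd.lid_comp_Δ,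
    LinearMap.id_comp, HB.snd.conv_S_id]

theorem conv_ρ_φ_rTensor (hcomm : ∀ x y : A, x * y = y * x) :
    mul' k (A ⊗[k] (A ⊗[k] A)) ∘ₗ
        (((LinearMap.id ⊗ₘ ι₁ k A A) ∘ₗ HB.ρ) ⊗ₘ
          ((TensorProduct.assoc k A A A).toLinearMap ∘ₗ (HB.φ ⊗ₘ LinearMap.id))) ∘ₗ
        (TensorProduct.assoc k A A A).toLinearMap ∘ₗ (HB.snd.Δ ⊗ₘ LinearMap.id)
      = (TensorProduct.assoc k A A A).toLinearMap ∘ₗ (HB.snd.Δ ⊗ₘ LinearMap.id) := by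
  refine TensorProduct.ext' fun c q => ?_
  set R := (TensorProduct.mk k A A).flip q
  have hφ : ((TensorProduct.assoc k A A A).toLinearMap ∘ₗ (HB.φ ⊗ₘ LinearMap.id)) ∘ₗ R
      = (LinearMap.id ⊗ₘ R) ∘ₗ HB.φ := by
    ext; simp [R, assoc_tmul]
  have hmul : mul' k (A ⊗[k] (A ⊗[k] A)) ∘ₗ ((LinearMap.id ⊗ₘ ι₁ k A A) ⊗ₘ (LinearMap.id ⊗ₘ R))
      = (LinearMap.id ⊗ₘ R) ∘ₗ mul' k (A ⊗[k] A) := by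
    ext; simp [R]
  have key : mul' k (A ⊗[k] (A ⊗[k] A)) ∘ₗ
        (((LinearMap.id ⊗ₘ ι₁ k A A) ∘ₗ HB.ρ) ⊗ₘ
          ((TensorProduct.assoc k A A A).toLinearMap ∘ₗ (HB.φ ⊗ₘ LinearMap.id))) ∘ₗ
        (LinearMap.id ⊗ₘ R) ∘ₗ HB.snd.Δ
      = (LinearMap.id ⊗ₘ R) ∘ₗ HB.snd.Δ := by
    calc _ = (mul' k (A ⊗[k] (A ⊗[k] A)) ∘ₗ ((LinearMap.id ⊗ₘ ι₁ k A A) ⊗ₘ (LinearMap.id ⊗ₘ R)))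
          ∘ₗ (HB.ρ ⊗ₘ HB.φ) ∘ₗ HB.snd.Δ := by
          ext; simp [← hφ, TensorProduct.map_map]
      _ = _ := by rw [hmul, LinearMap.comp_assoc, ← HopfStruct.conv, HB.conv_ρ_φ hcomm]
  simpa [assoc_tmul] using LinearMap.congr_fun key c

theorem map_id_comul_snd_comp_ρ (hcomm : ∀ x y : A, x * y = y * x) :
    (LinearMap.id ⊗ₘ HB.snd.Δ) ∘ₗ HB.ρ = HB.snd.conv ((LinearMap.id ⊗ₘ ι₁ k A A) ∘ₗ HB.ρ)
      ((TensorProduct.assoc k A A A).toLinearMap ∘ₗ (HB.φ ⊗ₘ LinearMap.id) ∘ₗ HB.ρ) := by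
  set F := (LinearMap.id ⊗ₘ ι₁ k A A) ∘ₗ HB.ρ
  set Φ := (TensorProduct.assoc k A A A).toLinearMap ∘ₗ (HB.φ ⊗ₘ LinearMap.id)
  have hρ := HB.isAlgebraMorphism_ρ hcomm
  have hF : IsAlgebraMorphism k A _ F :=
    (IsAlgebraMorphism.id_tensorMap isAlgebraMorphism_ι₁).comp hρ
  have hΦ : IsAlgebraMorphism k _ _ Φ :=
    isAlgebraMorphism_assoc.comp (HB.isAlgebraMorphism_φ hcomm).tensorMap_id
  have hmap : (F ⊗ₘ Φ ∘ₗ HB.ρ) = (F ⊗ₘ Φ) ∘ₗ (LinearMap.id ⊗ₘ HB.ρ) :=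
    TensorProduct.map_comp F Φ LinearMap.id HB.ρ
  have hrT := congrArg (· ∘ₗ HB.ρ) (HB.conv_ρ_φ_rTensor hcomm)
  simp only [LinearMap.comp_assoc] at hrT
  rw [← LinearMap.comp_assoc HB.ρ,
    HB.conv_snd_eq_conv_fst (mul_comm_tensor hcomm (mul_comm_tensor hcomm hcomm)) hF (hΦ.comp hρ),
    HB.map_id_comul_snd_comp_ρ_eq_conv hcomm, hmap, LinearMap.comp_assoc,
    HB.map_id_ρ_comp_ρ hcomm, hrT]

theorem map_id_comul_snd_comp_φ (hcomm : ∀ x y : A, x * y = y * x) :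
    (LinearMap.id ⊗ₘ HB.snd.Δ) ∘ₗ HB.φ
      = (TensorProduct.assoc k A A A).toLinearMap ∘ₗ (HB.φ ⊗ₘ LinearMap.id) ∘ₗ HB.φ := by
  set Φ := (TensorProduct.assoc k A A A).toLinearMap ∘ₗ (HB.φ ⊗ₘ LinearMap.id)
  have hΦ : IsAlgebraMorphism k _ _ Φ :=
    isAlgebraMorphism_assoc.comp (HB.isAlgebraMorphism_φ hcomm).tensorMap_id
  have hΦΔ : Φ ∘ₗ HB.snd.Δ = HB.snd.conv (((LinearMap.id ⊗ₘ ι₁ k A A) ∘ₗ HB.ρ) ∘ₗ HB.snd.S)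
      ((LinearMap.id ⊗ₘ HB.snd.Δ) ∘ₗ HB.snd.Δ) := by
    rw [LinearMap.comp_assoc, ← HB.snd.conv_map_id_ι₁_ι₂_ι₂, φ_eq_conv,
      HB.snd.comp_conv (.id_tensorMap isAlgebraMorphism_ι₁), HB.snd.conv_assoc,
      HB.snd.conv_map_id_ι₁_ι₂_ι₂, HB.snd.assoc_comp_map_Δ_comp_Δ, LinearMap.comp_assoc]
  calc (LinearMap.id ⊗ₘ HB.snd.Δ) ∘ₗ HB.φ
      = HB.snd.conv ((Φ ∘ₗ HB.ρ) ∘ₗ HB.snd.S) (Φ ∘ₗ HB.snd.Δ) := by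
        rw [φ_eq_conv, HB.snd.comp_conv (.id_tensorMap HB.snd.isAlgebraMorphism_Δ),
          ← LinearMap.comp_assoc HB.snd.S, HB.map_id_comul_snd_comp_ρ hcomm,
          HB.snd.conv_comp_S (mul_comm_tensor hcomm (mul_comm_tensor hcomm hcomm)),
          HB.snd.conv_assoc, ← hΦΔ]
        rfl
    _ = Φ ∘ₗ HB.φ := by rw [LinearMap.comp_assoc, ← HB.snd.comp_conv hΦ, ← φ_eq_conv]

theorem assoc_comp_map_comul_snd_comp_φ (hcomm : ∀ x y : A, x * y = y * x) :
    (TensorProduct.assoc k A A A).toLinearMap ∘ₗ (HB.snd.Δ ⊗ₘ LinearMap.id) ∘ₗ HB.φ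
      = HB.snd.conv ((LinearMap.id ⊗ₘ HB.ρ) ∘ₗ HB.φ) (ι₂ k A (A ⊗[k] A) ∘ₗ HB.φ) := by
  have hρ := HB.isAlgebraMorphism_ρ hcomm
  have hΘ : IsAlgebraMorphism k _ _
      ((TensorProduct.assoc k A A A).toLinearMap ∘ₗ (HB.snd.Δ ⊗ₘ LinearMap.id)) :=
    isAlgebraMorphism_assoc.comp HB.snd.isAlgebraMorphism_Δ.tensorMap_id
  have hcancel :
      HB.snd.conv (ι₂ k A (A ⊗[k] A) ∘ₗ HB.ρ) (ι₂ k A (A ⊗[k] A) ∘ₗ HB.ρ ∘ₗ HB.snd.S)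
        = HB.snd.convOne :=
    HB.snd.conv_self_comp_S (isAlgebraMorphism_ι₂.comp hρ)
  rw [φ_eq_conv, ← LinearMap.comp_assoc, HB.snd.comp_conv hΘ,
    HB.snd.comp_conv (.id_tensorMap hρ), HB.snd.comp_conv isAlgebraMorphism_ι₂,
    ← LinearMap.comp_assoc HB.snd.S, LinearMap.comp_assoc HB.ρ, ← HB.map_id_ρ_comp_ρ hcomm,
    LinearMap.comp_assoc HB.snd.Δ, HB.snd.assoc_comp_map_Δ_comp_Δ,
    ← HB.snd.conv_ι₁_ι₂_comp HB.snd.Δ, ← HB.snd.conv_ι₁_ι₂_comp HB.ρ]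
  simp only [HB.snd.conv_assoc]
  rw [← HB.snd.conv_assoc (ι₂ k A (A ⊗[k] A) ∘ₗ HB.ρ), hcancel, HB.snd.convOne_conv,
    LinearMap.comp_assoc]

end HopfBrace

/-- Proposition 3.3.  Let `(A, Δ, Δ')` be a commutative Hopf
brace with antipodes `S` (for `Δ`) and `T` (for `Δ'`), and define
`ρ(a) = S(a_1) a_{21'} ⊗ a_{22'}` and
`φ(a) = (T(a_{1'}))_{(-1)} a_{2'} ⊗ (T(a_{1'}))_{(0)} a_{3'}`.  Then
`(A_{Δ'}, A_{Δ'}, ρ, φ)` is a Hopf matched pair: `ρ` makes `A` a left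
`(A, Δ')`-comodule algebra, `φ` makes `A` a right `(A, Δ')`-comodule algebra,
and (HM1)–(HM4) hold (with `Δ'` as comultiplication on both factors). -/
theorem proposition_3_3 {k : Type*} [Field k] {A : Type*} [Ring A] [Algebra k A]
    (HB : HopfBrace k A) (hcomm : ∀ x y : A, x * y = y * x) :
    IsHopfMatchedPair k A A HB.snd.Δ HB.snd.ε HB.snd.Δ HB.snd.ε
      (ρmap k A HB.fst.Δ HB.snd.Δ HB.fst.S)
      (φmap k A HB.fst.Δ HB.snd.Δ HB.fst.S HB.snd.S) :=
  ⟨⟨LinearMap.congr_fun (HB.map_id_ρ_comp_ρ hcomm), LinearMap.congr_fun HB.lid_comp_ρ⟩,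
    HB.isAlgebraMorphism_ρ hcomm,
    ⟨LinearMap.congr_fun (HB.map_id_comul_snd_comp_φ hcomm),
      LinearMap.congr_fun (HB.rid_comp_φ hcomm)⟩,
    HB.isAlgebraMorphism_φ hcomm,
    LinearMap.congr_fun (HB.rid_comp_ρ hcomm),
    LinearMap.congr_fun HB.lid_comp_φ,
    LinearMap.congr_fun (HB.map_id_comul_snd_comp_ρ hcomm),
    LinearMap.congr_fun (HB.assoc_comp_map_comul_snd_comp_φ hcomm),
    fun _ _ => mul_comm_tensor hcomm hcomm _ _⟩

end HopfPaper
end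
end
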